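/- arXiv:1505.03091 — 3 statements merged into one kernel-verified Lean document; each statement's English description precedes it below -/
import Mathlib

section
/- Let S_k = Σ_{m=0}^{k}(-t)^m and T_k = Σ_{m=1}^{k}(-1)^{m+1}t^m in ℚ(t). Define f(k) = S_k·(1-2t+2t²-2t³+t⁴) + T_k·(-t^{-2}+3t^{-1}-4+3t-t²) + T_k·(-t^{-2}+2t^{-1}-1) - t^{-3}+3t^{-2}-6t^{-1}+6-3t+t² and g(k) = S_k·(1-t) + 3 - 2t^{-1} - 2t + t². Then for every k ≥ 0, f(k) ≠ g(k) as elements of ℚ(t). -/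
open Finset

noncomputable section

def t : RatFunc ℚ := RatFunc.X

def S (k : ℕ) : RatFunc ℚ := ∑ m ∈ range (k + 1), (-t) ^ m

def T (k : ℕ) : RatFunc ℚ := ∑ m ∈ Icc 1 k, (-1 : RatFunc ℚ) ^ (m + 1) * t ^ m

def f (k : ℕ) : RatFunc ℚ :=
  S k * (1 - 2 * t + 2 * t ^ 2 - 2 * t ^ 3 + t ^ 4) +
    T k * (-t⁻¹ ^ 2 + 3 * t⁻¹ - 4 + 3 * t - t ^ 2) +
    T k * (-t⁻¹ ^ 2 + 2 * t⁻¹ - 1) +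
    (-t⁻¹ ^ 3 + 3 * t⁻¹ ^ 2 - 6 * t⁻¹ + 6 - 3 * t + t ^ 2)

def g (k : ℕ) : RatFunc ℚ :=
  S k * (1 - t) + 3 - 2 * t⁻¹ - 2 * t + t ^ 2

open Polynomial

/-- Writing `D k := (1 + t) t³ (f k - g k)`, the relations `T k = 1 - S k` and
`(1 + t) S k = 1 - (-t)^(k+1)` make `D k` the polynomial `P + (-t)^(k+1) Q` below.
At `t = 2` it takes the value `23 - 56 (-2)^(k+1)`, which is odd, so `D k ≠ 0`. -/
def diffPoly (k : ℕ) : ℚ[X] :=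
  (X ^ 7 - 3 * X ^ 6 + 4 * X ^ 5 - 4 * X ^ 4 + 4 * X ^ 3 - 3 * X ^ 2 + 2 * X - 1) +
    (-X) ^ (k + 1) * (-X ^ 7 + 2 * X ^ 6 - 3 * X ^ 5 + 4 * X ^ 4 - 5 * X ^ 3 + 5 * X ^ 2 - 2 * X)

lemma T_eq_one_sub_S (k : ℕ) : T k = 1 - S k := by
  induction k with
  | zero => simp [T, S]
  | succ n ih =>
    rw [T, sum_Icc_succ_top (by omega), ← T, S, sum_range_succ, ← S, ih]
    ring

lemma one_add_t_mul_S (k : ℕ) : (1 + t) * S k = 1 - (-t) ^ (k + 1) := by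
  rw [S, ← mul_neg_geom_sum, sub_neg_eq_add]

lemma t_pow_three_mul_f_sub_g (k : ℕ) :
    t ^ 3 * (f k - g k) =
      S k * (t ^ 7 - 2 * t ^ 6 + 2 * t ^ 5 - t ^ 4) +
        (1 - S k) * (-2 * t + 5 * t ^ 2 - 5 * t ^ 3 + 3 * t ^ 4 - t ^ 5) +
        (-1 + 3 * t - 4 * t ^ 2 + 3 * t ^ 3 - t ^ 4) := by
  have ht : t ≠ 0 := RatFunc.X_ne_zero
  rw [f, g, T_eq_one_sub_S]
  field_simp
  ring

lemma algebraMap_diffPoly (k : ℕ) :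
    algebraMap ℚ[X] (RatFunc ℚ) (diffPoly k) = (1 + t) * t ^ 3 * (f k - g k) := by
  simp only [diffPoly, map_add, map_sub, map_mul, map_pow, map_neg, map_one, map_ofNat,
    RatFunc.algebraMap_X, ← t.eq_1]
  rw [mul_assoc, t_pow_three_mul_f_sub_g]
  linear_combination (-(t ^ 7 - 2 * t ^ 6 + 2 * t ^ 5 - t ^ 4) +
    (-2 * t + 5 * t ^ 2 - 5 * t ^ 3 + 3 * t ^ 4 - t ^ 5)) * one_add_t_mul_S k

lemma diffPoly_eval_two (k : ℕ) : (diffPoly k).eval 2 = ((23 - 56 * (-2) ^ (k + 1) : ℤ) : ℚ) := by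
  simp only [diffPoly, eval_add, eval_sub, eval_mul, eval_pow, eval_neg, eval_ofNat, eval_one,
    eval_X]
  push_cast
  ring

lemma diffPoly_ne_zero (k : ℕ) : diffPoly k ≠ 0 := by
  intro h
  have hval := diffPoly_eval_two k
  rw [h, eval_zero] at hval
  have hodd : (23 - 56 * (-2) ^ (k + 1) : ℤ) = 0 := by exact_mod_cast hval.symm
  omega

theorem stmt_13 (k : ℕ) : f k ≠ g k := by
  intro h
  have h0 := algebraMap_diffPoly k
  rw [h, sub_self, mul_zero] at h0
  exact RatFunc.algebraMap_ne_zero (diffPoly_ne_zero k) h0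

end
end

section
/- The unreduced Burau matrices (with parameter t) of the braid words σ₃²σ₂²σ₃⁻¹σ₁²σ₂σ₁⁻¹ and σ₃²σ₂²σ₃⁻¹σ₁⁻¹σ₂σ₁² in B₄ have different traces as elements of ℚ(t). -/
noncomputable section

/-- Unreduced Burau matrix of `σ₁ ∈ B₄`. -/
def b1 : Matrix (Fin 4) (Fin 4) (RatFunc ℚ) :=
  !![1 - t, t, 0, 0; 1, 0, 0, 0; 0, 0, 1, 0; 0, 0, 0, 1]

/-- Unreduced Burau matrix of `σ₂ ∈ B₄`. -/
def b2 : Matrix (Fin 4) (Fin 4) (RatFunc ℚ) :=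
  !![1, 0, 0, 0; 0, 1 - t, t, 0; 0, 1, 0, 0; 0, 0, 0, 1]

/-- Unreduced Burau matrix of `σ₃ ∈ B₄`. -/
def b3 : Matrix (Fin 4) (Fin 4) (RatFunc ℚ) :=
  !![1, 0, 0, 0; 0, 1, 0, 0; 0, 0, 1 - t, t; 0, 0, 1, 0]

/-- Unreduced Burau matrix of `σ₁⁻¹ ∈ B₄`. -/
def b1i : Matrix (Fin 4) (Fin 4) (RatFunc ℚ) :=
  !![0, 1, 0, 0; t⁻¹, 1 - t⁻¹, 0, 0; 0, 0, 1, 0; 0, 0, 0, 1]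

/-- Unreduced Burau matrix of `σ₂⁻¹ ∈ B₄`. -/
def b2i : Matrix (Fin 4) (Fin 4) (RatFunc ℚ) :=
  !![1, 0, 0, 0; 0, 0, 1, 0; 0, t⁻¹, 1 - t⁻¹, 0; 0, 0, 0, 1]

/-- Unreduced Burau matrix of `σ₃⁻¹ ∈ B₄`. -/
def b3i : Matrix (Fin 4) (Fin 4) (RatFunc ℚ) :=
  !![1, 0, 0, 0; 0, 1, 0, 0; 0, 0, 0, 1; 0, 0, t⁻¹, 1 - t⁻¹]


set_option maxHeartbeats 1000000 in
theorem stmt_15 :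
    (b3 * b3 * b2 * b2 * b3i * b1 * b1 * b2 * b1i).trace ≠
      (b3 * b3 * b2 * b2 * b3i * b1i * b2 * b1 * b1).trace := by
  have ht : t ≠ 0 := RatFunc.X_ne_zero
  have e1 : (b3 * b3 * b2 * b2 * b3i * b1 * b1 * b2 * b1i).trace
      = t - t^2 + t^4 - t^5 := by
    simp [b1, b2, b3, b1i, b3i, Matrix.trace, Matrix.diag, Fin.sum_univ_four,
      Matrix.mul_apply, Matrix.vecHead, Matrix.vecTail]
    field_simp
    ring
  have e2 : (b3 * b3 * b2 * b2 * b3i * b1i * b2 * b1 * b1).trace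
      = -1 + 4*t - 6*t^2 + 5*t^3 - 2*t^4 := by
    simp [b1, b2, b3, b1i, b3i, Matrix.trace, Matrix.diag, Fin.sum_univ_four,
      Matrix.mul_apply, Matrix.vecHead, Matrix.vecTail]
    field_simp
    ring
  rw [e1, e2]
  intro h
  have h2 : (Polynomial.X - Polynomial.X^2 + Polynomial.X^4 - Polynomial.X^5 : Polynomial ℚ)
      = -1 + 4*Polynomial.X - 6*Polynomial.X^2 + 5*Polynomial.X^3 - 2*Polynomial.X^4 := by
    apply IsFractionRing.injective (Polynomial ℚ) (RatFunc ℚ)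
    simpa [map_add, map_sub, map_mul, map_pow, map_one, map_neg, map_ofNat,
      RatFunc.algebraMap_X, t] using h
  have h3 := congrArg (Polynomial.eval 0) h2
  simp at h3

end
end

section
/- For n ≥ 2 and 1 ≤ i ≤ n-1, define L(σᵢ⁻¹) to be the n×n matrix over ℚ(q) with 2x2 block [[0, -q^{-2}],[-q^{-2}, -q^{-3}+q^{-1}]] in rows/columns i, i+1 and q^{-1} on the diagonal elsewhere, and let A = diag((-1)^{j+1}q^{-j})_{j=1}^n. Then A·L(σᵢ⁻¹)·A^{-1} = q^{-1}·Φ(σᵢ⁻¹, q²), where Φ(σᵢ⁻¹, t) is the matrix with block [[0,1],[t^{-1},1-t^{-1}]] in rows/columns i, i+1 and identity elsewhere. -/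
noncomputable section

def q : RatFunc ℚ := RatFunc.X

/-- `L(σᵢ⁻¹)`: the `n×n` matrix with block `[[0, -q⁻²],[-q⁻², -q⁻³+q⁻¹]]` in rows/columns
`i, i+1` (0-indexed) and `q⁻¹` elsewhere on the diagonal. -/
def Linv (n i : ℕ) : Matrix (Fin n) (Fin n) (RatFunc ℚ) := fun r c =>
  if (r : ℕ) = i ∧ (c : ℕ) = i then 0
  else if ((r : ℕ) = i ∧ (c : ℕ) = i + 1) ∨ ((r : ℕ) = i + 1 ∧ (c : ℕ) = i) then -q⁻¹ ^ 2
  else if (r : ℕ) = i + 1 ∧ (c : ℕ) = i + 1 then -q⁻¹ ^ 3 + q⁻¹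
  else if r = c then q⁻¹ else 0

/-- `Φ(σᵢ⁻¹, t)`: block `[[0, 1],[t⁻¹, 1-t⁻¹]]` in rows/columns `i, i+1` (0-indexed),
identity elsewhere. -/
def PhiInv (n i : ℕ) (t : RatFunc ℚ) : Matrix (Fin n) (Fin n) (RatFunc ℚ) := fun r c =>
  if (r : ℕ) = i ∧ (c : ℕ) = i then 0
  else if (r : ℕ) = i ∧ (c : ℕ) = i + 1 then 1
  else if (r : ℕ) = i + 1 ∧ (c : ℕ) = i then t⁻¹
  else if (r : ℕ) = i + 1 ∧ (c : ℕ) = i + 1 then 1 - t⁻¹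
  else if r = c then 1 else 0

/-- The conjugating diagonal matrix `A` with `j`-th diagonal entry `(-1)^{j+1} q^{-j}`. -/
def Amat (n : ℕ) : Matrix (Fin n) (Fin n) (RatFunc ℚ) :=
  Matrix.diagonal fun j : Fin n => (-1) ^ (j : ℕ) * q⁻¹ ^ ((j : ℕ) + 1)

set_option synthInstance.maxHeartbeats 400000 in
theorem stmt_18 (n : ℕ) (hn : 2 ≤ n) (i : ℕ) (hi : i + 1 < n) :
    Amat n * Linv n i * (Amat n)⁻¹ = q⁻¹ • PhiInv n i (q ^ 2) := by
  have hq : q ≠ 0 := RatFunc.X_ne_zero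
  have hq' : q⁻¹ ≠ 0 := inv_ne_zero hq
  have hAinv : (Amat n)⁻¹ =
      Matrix.diagonal (fun j : Fin n => ((-1 : RatFunc ℚ) ^ (j : ℕ) * q⁻¹ ^ ((j : ℕ) + 1))⁻¹) :=
    Matrix.inv_eq_right_inv (by
      rw [Amat, Matrix.diagonal_mul_diagonal]
      have h1 : ∀ j : Fin n, ((-1 : RatFunc ℚ) ^ (j : ℕ) * q⁻¹ ^ ((j : ℕ) + 1)) *
          ((-1 : RatFunc ℚ) ^ (j : ℕ) * q⁻¹ ^ ((j : ℕ) + 1))⁻¹ = 1 := fun j =>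
        mul_inv_cancel₀ (mul_ne_zero (pow_ne_zero _ (by norm_num)) (pow_ne_zero _ hq'))
      simp only [h1, Matrix.diagonal_one])
  ext r c
  rw [hAinv, Amat]
  simp only [Matrix.mul_diagonal, Matrix.diagonal_mul, Matrix.smul_apply,
    Linv, PhiInv, smul_eq_mul, Fin.ext_iff]
  split_ifs with h1 h2 h3 h4 h5 h6 h7 h8 <;>
    first
      | (exact absurd rfl (by omega))
      | simp_all <;> field_simp <;> ring

end
end
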